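/- arXiv:1704.00273 — 2 statements merged into one kernel-verified Lean document; each statement's English description precedes it below -/
import Mathlib

section
/- Let n ∈ ℕ and let G ∈ ℝ^{n×n} be symmetric positive semidefinite. Then |√G − I| ≤ |G − I|, where √G is the unique positive semidefinite square root of G, I is the identity matrix, and |·| denotes the Frobenius norm. -/
/-!
For a symmetric matrix `A`, `|A|² = tr (A²)`. With `S = √G` one has
`(S² - I)² = (S - I)² + (S - I)(S² + 2S)(S - I)`, and the second summand is positive
semidefinite because `S` is, so its trace is nonnegative and `tr (S - I)² ≤ tr (G - I)²`.
-/

open Matrix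

noncomputable section

/-- Frobenius norm of an `n × n` matrix. -/
def frobN {n : ℕ} (M : Matrix (Fin n) (Fin n) ℝ) : ℝ := Real.sqrt (∑ i, ∑ j, (M i j)^2)

/-- The square root of a positive semidefinite matrix, as `Matrix.PosSemidef.sqrt` was
defined in the older Mathlib (removed since). -/
def posSemidefSqrtOld {n : ℕ} {G : Matrix (Fin n) (Fin n) ℝ} (hG : G.PosSemidef) :
    Matrix (Fin n) (Fin n) ℝ :=
  hG.1.eigenvectorUnitary.1 * diagonal ((↑) ∘ (√·) ∘ hG.1.eigenvalues) *
  (star hG.1.eigenvectorUnitary : Matrix (Fin n) (Fin n) ℝ)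

lemma trace_sub_one_mul_self_le_of_posSemidef {m R : Type*} [Fintype m] [DecidableEq m]
    [CommRing R] [PartialOrder R] [StarRing R] [StarOrderedRing R]
    {S : Matrix m m R} (hS : S.PosSemidef) :
    ((S - 1) * (S - 1)).trace ≤ ((S * S - 1) * (S * S - 1)).trace := by
  have h_expand : (S * S - 1) * (S * S - 1) =
      (S - 1) * (S - 1) + (S - 1)ᴴ * (S * S + S + S) * (S - 1) := by
    rw [(hS.isHermitian.sub isHermitian_one).eq]
    noncomm_ring
  have h_middle : (S * S + S + S).PosSemidef := by
    simpa only [sq] using ((hS.pow 2).add hS).add hS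
  rw [h_expand, trace_add, le_add_iff_nonneg_right]
  exact (h_middle.conjTranspose_mul_mul_same (S - 1)).trace_nonneg

lemma frobN_eq_sqrt_trace_mul_self {n : ℕ} {A : Matrix (Fin n) (Fin n) ℝ} (hA : A.IsHermitian) :
    frobN A = √(A * A).trace := by
  simp only [frobN, trace, diag_apply, mul_apply, sq]
  congr 1
  refine Finset.sum_congr rfl fun i _ => Finset.sum_congr rfl fun j _ => ?_
  rw [← hA.apply j i, star_trivial]

lemma posSemidefSqrtOld_posSemidef {n : ℕ} {G : Matrix (Fin n) (Fin n) ℝ} (hG : G.PosSemidef) :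
    (posSemidefSqrtOld hG).PosSemidef := by
  have hD : (diagonal ((↑) ∘ (√·) ∘ hG.1.eigenvalues) : Matrix (Fin n) (Fin n) ℝ).PosSemidef :=
    posSemidef_diagonal_iff.mpr fun i => by simp [Real.sqrt_nonneg]
  simpa [posSemidefSqrtOld, star_eq_conjTranspose] using
    hD.mul_mul_conjTranspose_same hG.1.eigenvectorUnitary.1

lemma posSemidefSqrtOld_mul_self {n : ℕ} {G : Matrix (Fin n) (Fin n) ℝ} (hG : G.PosSemidef) :
    posSemidefSqrtOld hG * posSemidefSqrtOld hG = G := by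
  have hspec := hG.1.spectral_theorem
  rw [Unitary.conjStarAlgAut_apply] at hspec
  conv_rhs => rw [hspec]
  have hU := Unitary.coe_star_mul_self hG.1.eigenvectorUnitary
  simp only [posSemidefSqrtOld, Matrix.mul_assoc]
  rw [← Matrix.mul_assoc _ _ (diagonal _ * _), hU, Matrix.one_mul,
    ← Matrix.mul_assoc (diagonal _), diagonal_mul_diagonal]
  congr 3
  ext i
  simp [Real.mul_self_sqrt (hG.eigenvalues_nonneg i)]

/-- For a positive semidefinite matrix `G`, the Frobenius distance from its unique
positive semidefinite square root to the identity is at most `|G − I|`. -/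
theorem frob_sqrt_sub_one_le
    (n : ℕ) (G : Matrix (Fin n) (Fin n) ℝ) (hG : G.PosSemidef) :
    frobN (posSemidefSqrtOld hG - 1) ≤ frobN (G - 1) := by
  have hS := posSemidefSqrtOld_posSemidef hG
  have h_trace := trace_sub_one_mul_self_le_of_posSemidef hS
  rw [posSemidefSqrtOld_mul_self hG] at h_trace
  rw [frobN_eq_sqrt_trace_mul_self (hS.isHermitian.sub isHermitian_one),
    frobN_eq_sqrt_trace_mul_self (hG.isHermitian.sub isHermitian_one)]
  exact Real.sqrt_le_sqrt h_trace
end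
end

section
/- Let F ∈ ℝ^{2×2} with det F > 0. Then dist(F, SO(2)) = |√(FᵀF) − I|, where dist(F, SO(2)) = min_{R ∈ SO(2)} |F − R|, √(FᵀF) is the unique positive semidefinite square root of FᵀF, and |·| denotes the Frobenius norm. -/
/-!
For `R ∈ SO(2)` one has `|F - R|² = |F|² + 2 - 2 tr (Rᵀ F)`, and writing `R` as the rotation
`(c, -s; s, c)` gives `tr (Rᵀ F) = c (F₀₀ + F₁₁) + s (F₁₀ - F₀₁)`, whose maximum over the unit
circle is `ρ = √((F₀₀ + F₁₁)² + (F₁₀ - F₀₁)²)` by Cauchy–Schwarz. Taking `R = I` in the same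
identity, `|S - I|² = |S|² + 2 - 2 tr S = |F|² + 2 - 2 tr S`. Finally, for 2×2 matrices
`(tr S)² = tr (S²) + 2 det S = tr (Fᵀ F) + 2 det F = ρ²`, where `det S = det F` because both are
nonnegative with equal squares; hence `tr S = ρ`.
-/

open Matrix

noncomputable section

abbrev Mat2 := Matrix (Fin 2) (Fin 2) ℝ

/-- Frobenius norm of a matrix. -/
def frob (M : Mat2) : ℝ := Real.sqrt (∑ i, ∑ j, (M i j)^2)

/-- The rotation group `SO(2)`. -/
def SO2 : Set Mat2 := {R | Rᵀ * R = 1 ∧ R.det = 1}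

/-- Frobenius distance from a matrix to `SO(2)`. -/
def distSO2 (F : Mat2) : ℝ := sInf {d | ∃ R ∈ SO2, d = frob (F - R)}

theorem Matrix.sum_sq_eq_trace_transpose_mul {m n R : Type*} [Fintype m] [Fintype n]
    [CommSemiring R] (M : Matrix m n R) : ∑ i, ∑ j, M i j ^ 2 = trace (Mᵀ * M) := by
  simp only [trace, diag, mul_apply, transpose_apply, sq]
  exact Finset.sum_comm

lemma frob_nonneg (M : Mat2) : 0 ≤ frob M := Real.sqrt_nonneg _

lemma frob_sq (M : Mat2) : frob M ^ 2 = trace (Mᵀ * M) := by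
  rw [frob, Real.sq_sqrt (by positivity), sum_sq_eq_trace_transpose_mul]

lemma frob_sub_sq_of_transpose_mul_self {F R : Mat2} (hR : Rᵀ * R = 1) :
    frob (F - R) ^ 2 = frob F ^ 2 + 2 - 2 * trace (Rᵀ * F) := by
  have hFR : trace (Fᵀ * R) = trace (Rᵀ * F) := by
    rw [← trace_transpose, transpose_mul, transpose_transpose]
  rw [frob_sq, frob_sq, transpose_sub, sub_mul, mul_sub, mul_sub, trace_sub, trace_sub,
    trace_sub, hR, hFR, trace_one, Fintype.card_fin]
  ring

lemma mem_SO2_iff {R : Mat2} :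
    R ∈ SO2 ↔ ∃ c s : ℝ, c ^ 2 + s ^ 2 = 1 ∧ R = !![c, -s; s, c] := by
  constructor
  · rintro ⟨hRR, hdet⟩
    have e00 := congrFun (congrFun hRR 0) 0
    have e11 := congrFun (congrFun hRR 1) 1
    simp only [mul_apply, transpose_apply, Fin.sum_univ_two, one_apply_eq] at e00 e11
    rw [det_fin_two] at hdet
    have hsq : (R 0 1 + R 1 0) ^ 2 + (R 1 1 - R 0 0) ^ 2 = 0 := by
      linear_combination e00 + e11 - 2 * hdet
    have h01 : R 0 1 = -R 1 0 := by nlinarith [sq_nonneg (R 1 1 - R 0 0)]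
    have h11 : R 1 1 = R 0 0 := by nlinarith [sq_nonneg (R 0 1 + R 1 0)]
    refine ⟨R 0 0, R 1 0, by linear_combination e00, ?_⟩
    conv_lhs => rw [eta_fin_two R]
    rw [h01, h11]
  · rintro ⟨c, s, hcs, rfl⟩
    refine ⟨?_, by rw [det_fin_two_of]; linear_combination hcs⟩
    ext i j
    fin_cases i <;> fin_cases j <;> simp [mul_apply, Fin.sum_univ_two] <;>
      first | ring1 | linear_combination hcs

def maxTraceSO2 (F : Mat2) : ℝ := √((F 0 0 + F 1 1) ^ 2 + (F 1 0 - F 0 1) ^ 2)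

lemma trace_rotation_transpose_mul (c s : ℝ) (F : Mat2) :
    trace (!![c, -s; s, c]ᵀ * F) = c * (F 0 0 + F 1 1) + s * (F 1 0 - F 0 1) := by
  simp only [trace_fin_two, mul_apply, transpose_apply, of_apply, cons_val', cons_val_zero,
    cons_val_one, cons_val_fin_one, Fin.sum_univ_two]
  ring

lemma trace_transpose_mul_le_maxTraceSO2 {R : Mat2} (hR : R ∈ SO2) (F : Mat2) :
    trace (Rᵀ * F) ≤ maxTraceSO2 F := by
  obtain ⟨c, s, hcs, rfl⟩ := mem_SO2_iff.mp hR
  rw [trace_rotation_transpose_mul, maxTraceSO2]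
  apply Real.le_sqrt_of_sq_le
  nlinarith [sq_nonneg (c * (F 1 0 - F 0 1) - s * (F 0 0 + F 1 1))]

lemma exists_mem_SO2_trace_transpose_mul_eq (F : Mat2) :
    ∃ R ∈ SO2, trace (Rᵀ * F) = maxTraceSO2 F := by
  set x := F 0 0 + F 1 1
  set y := F 1 0 - F 0 1
  set ρ := maxTraceSO2 F
  have hρ : ρ ^ 2 = x ^ 2 + y ^ 2 := Real.sq_sqrt (by positivity)
  rcases eq_or_ne ρ 0 with h0 | h0
  · refine ⟨!![1, -0; 0, 1], mem_SO2_iff.mpr ⟨1, 0, by norm_num, rfl⟩, ?_⟩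
    rw [trace_rotation_transpose_mul, h0]
    nlinarith [sq_nonneg x, sq_nonneg y]
  · refine ⟨!![x / ρ, -(y / ρ); y / ρ, x / ρ], mem_SO2_iff.mpr ⟨_, _, ?_, rfl⟩, ?_⟩
    · field_simp; linear_combination -hρ
    · rw [trace_rotation_transpose_mul]; field_simp; linear_combination -hρ

theorem distSO2_eq_sqrt (F : Mat2) :
    distSO2 F = √(frob F ^ 2 + 2 - 2 * maxTraceSO2 F) := by
  have hfrob : ∀ R ∈ SO2, frob (F - R) = √(frob F ^ 2 + 2 - 2 * trace (Rᵀ * F)) := fun R hR => by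
    rw [← frob_sub_sq_of_transpose_mul_self hR.1, Real.sqrt_sq (frob_nonneg _)]
  apply IsLeast.csInf_eq
  refine ⟨?_, ?_⟩
  · obtain ⟨R, hR, htr⟩ := exists_mem_SO2_trace_transpose_mul_eq F
    exact ⟨R, hR, by rw [hfrob R hR, htr]⟩
  · rintro _ ⟨R, hR, rfl⟩
    rw [hfrob R hR]
    gcongr
    exact trace_transpose_mul_le_maxTraceSO2 hR F

lemma Matrix.trace_sq_fin_two {R : Type*} [CommRing R] (A : Matrix (Fin 2) (Fin 2) R) :
    trace A ^ 2 = trace (A * A) + 2 * det A := by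
  simp only [trace_fin_two, det_fin_two, mul_apply, Fin.sum_univ_two]
  ring

lemma maxTraceSO2_sq (F : Mat2) : maxTraceSO2 F ^ 2 = trace (Fᵀ * F) + 2 * det F := by
  rw [maxTraceSO2, Real.sq_sqrt (by positivity)]
  simp only [trace_fin_two, det_fin_two, mul_apply, transpose_apply, Fin.sum_univ_two]
  ring

lemma Matrix.PosSemidef.det_eq_of_mul_self_eq {n : Type*} [Fintype n] [DecidableEq n]
    {S F : Matrix n n ℝ} (hS : S.PosSemidef) (hF : 0 ≤ F.det)
    (hSS : S * S = Fᵀ * F) : S.det = F.det := by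
  rw [← mul_self_inj hS.det_nonneg hF, ← det_mul, hSS, det_mul, det_transpose]

lemma Matrix.PosSemidef.trace_eq_maxTraceSO2 {S F : Mat2} (hS : S.PosSemidef) (hF : 0 ≤ F.det)
    (hSS : S * S = Fᵀ * F) : S.trace = maxTraceSO2 F := by
  refine (pow_left_inj₀ hS.trace_nonneg (show 0 ≤ maxTraceSO2 F from Real.sqrt_nonneg _)
    two_ne_zero).mp ?_
  rw [trace_sq_fin_two, maxTraceSO2_sq, hSS, hS.det_eq_of_mul_self_eq hF hSS]

/-- For `F` with `det F > 0`, the distance of `F` to `SO(2)` equals `|√(FᵀF) − I|`,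
where `√(FᵀF)` is the unique positive semidefinite square root of `FᵀF`. -/
theorem dist_SO2_eq_frob_sqrt
    (F : Mat2) (hF : 0 < F.det) :
    ∀ S : Mat2, S.PosSemidef → S * S = Fᵀ * F → distSO2 F = frob (S - 1) := by
  intro S hS hSS
  have hSt : Sᵀ = S := hS.1
  have hfrobS : frob S ^ 2 = frob F ^ 2 := by rw [frob_sq, frob_sq, hSt, hSS]
  have hS1 : frob (S - 1) ^ 2 = frob F ^ 2 + 2 - 2 * maxTraceSO2 F := by
    rw [frob_sub_sq_of_transpose_mul_self (by simp), transpose_one, one_mul, hfrobS,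
      hS.trace_eq_maxTraceSO2 hF.le hSS]
  rw [distSO2_eq_sqrt, ← hS1, Real.sqrt_sq (frob_nonneg _)]
end
end
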